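/- Conservativity criterion for disjointness: let π : E ⥤ B be a bicartesian fibration with stable internal sums (pullbacks of cocartesian arrows along arbitrary arrows exist and are cocartesian). Then cocartesian arrows satisfy left cancellation (g and g∘f cocartesian imply f cocartesian) if and only if: whenever k is a vertical arrow (π maps it to an identity/isomorphism) and both f and f∘k are cocartesian, then k is an isomorphism. -/

import Mathlib

/-!
Every arrow `f` factors as a cocartesian arrow `c` followed by a vertical arrow `v`. If `f ≫ g`
and `g` are cocartesian, then so is `v ≫ g` (cancelling the cocartesian `c`), so conservativity
makes `v` an isomorphism and `f = c ≫ v` cocartesian. Conversely, left cancellation makes a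
vertical `k` with `f` and `k ≫ f` cocartesian itself cocartesian, and a vertical cocartesian
arrow is an isomorphism.
-/

open CategoryTheory CategoryTheory.Limits

/-- An arrow of the total category is cocartesian for the functor `F`. -/
def IsCocartArrow {E B : Type*} [Category E] [Category B] (F : E ⥤ B)
    {e e' : E} (f : e ⟶ e') : Prop :=
  ∀ (e'' : E) (v : F.obj e' ⟶ F.obj e'') (h : e ⟶ e''),
    F.map h = F.map f ≫ v → ∃! g : e' ⟶ e'', F.map g = v ∧ f ≫ g = h

/-- An arrow of the total category is cartesian for the functor `F`. -/
def IsCartArrow {E B : Type*} [Category E] [Category B] (F : E ⥤ B)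
    {e e' : E} (f : e ⟶ e') : Prop :=
  ∀ (e'' : E) (v : F.obj e'' ⟶ F.obj e) (h : e'' ⟶ e'),
    F.map h = v ≫ F.map f → ∃! g : e'' ⟶ e, F.map g = v ∧ g ≫ f = h

/-- `π` is a Grothendieck opfibration: cocartesian lifts exist. -/
def HasCocartLifts {E B : Type*} [Category E] [Category B] (π : E ⥤ B) : Prop :=
  ∀ (e : E) ⦃b' : B⦄ (u : π.obj e ⟶ b'),
    ∃ (e' : E) (h : π.obj e' = b') (f : e ⟶ e'),
      π.map f = u ≫ eqToHom h.symm ∧ IsCocartArrow π f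

/-- `π` is a Grothendieck fibration: cartesian lifts exist. -/
def HasCartLifts {E B : Type*} [Category E] [Category B] (π : E ⥤ B) : Prop :=
  ∀ (e : E) ⦃b : B⦄ (u : b ⟶ π.obj e),
    ∃ (e' : E) (h : π.obj e' = b) (f : e' ⟶ e),
      π.map f = eqToHom h ≫ u ∧ IsCartArrow π f

namespace IsCocartArrow

variable {E B : Type*} [Category E] [Category B] {π : E ⥤ B}

lemma of_isIso {x y : E} (k : x ⟶ y) [IsIso k] : IsCocartArrow π k := by
  intro e'' t h hmap
  refine ⟨inv k ≫ h, ⟨by simp [hmap], by simp⟩, ?_⟩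
  rintro y ⟨-, rfl⟩
  simp

lemma comp {a b c : E} {f : a ⟶ b} {g : b ⟶ c} (hf : IsCocartArrow π f)
    (hg : IsCocartArrow π g) : IsCocartArrow π (f ≫ g) := by
  intro e'' t h hmap
  obtain ⟨u, ⟨hu_map, hu_fac⟩, hu_uniq⟩ :=
    hf e'' (π.map g ≫ t) h (by rw [hmap, Functor.map_comp, Category.assoc])
  obtain ⟨w, ⟨hw_map, hw_fac⟩, hw_uniq⟩ := hg e'' t u hu_map
  refine ⟨w, ⟨hw_map, by rw [Category.assoc, hw_fac, hu_fac]⟩, ?_⟩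
  rintro y ⟨hy_map, hy_fac⟩
  refine hw_uniq y ⟨hy_map, hu_uniq _ ⟨by rw [Functor.map_comp, hy_map], ?_⟩⟩
  rwa [← Category.assoc]

lemma of_comp {d m e : E} {c : d ⟶ m} {w : m ⟶ e} (hc : IsCocartArrow π c)
    (hcw : IsCocartArrow π (c ≫ w)) : IsCocartArrow π w := by
  intro e'' t h hmap
  obtain ⟨g, ⟨hg_map, hg_fac⟩, hg_uniq⟩ :=
    hcw e'' t (c ≫ h) (by rw [Functor.map_comp, hmap, Functor.map_comp, Category.assoc])
  refine ⟨g, ⟨hg_map, ?_⟩, fun y ⟨hy_map, hy_fac⟩ ↦ hg_uniq y ⟨hy_map, by simp [hy_fac]⟩⟩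
  obtain ⟨_, _, h_uniq⟩ := hc e'' (π.map w ≫ t) (c ≫ h) (by rw [Functor.map_comp, hmap])
  exact (h_uniq _ ⟨by rw [Functor.map_comp, hg_map], by simpa using hg_fac⟩).trans
    (h_uniq _ ⟨hmap, rfl⟩).symm

lemma isIso_of_isIso_map {x y : E} {k : x ⟶ y} (hc : IsCocartArrow π k)
    (hv : IsIso (π.map k)) : IsIso k := by
  obtain ⟨g, ⟨hg_map, hg_fac⟩, -⟩ := hc x (inv (π.map k)) (𝟙 x) (by simp)
  obtain ⟨_, _, h_uniq⟩ := hc y (𝟙 (π.obj y)) k (by simp)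
  refine ⟨g, hg_fac, ?_⟩
  exact (h_uniq _ ⟨by simp [hg_map], by rw [← Category.assoc, hg_fac, Category.id_comp]⟩).trans
    (h_uniq _ ⟨by simp, by simp⟩).symm

end IsCocartArrow

lemma HasCocartLifts.exists_cocart_comp_vertical {E B : Type*} [Category E] [Category B]
    {π : E ⥤ B} (hπ : HasCocartLifts π) {d e : E} (f : d ⟶ e) :
    ∃ (m : E) (c : d ⟶ m) (v : m ⟶ e),
      IsCocartArrow π c ∧ IsIso (π.map v) ∧ c ≫ v = f := by
  obtain ⟨m, hm, c, hc_map, hc⟩ := hπ d (π.map f)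
  obtain ⟨v, ⟨hv_map, hv_fac⟩, -⟩ := hc e (eqToHom hm) f (by simp [hc_map])
  exact ⟨m, c, v, hc, hv_map ▸ inferInstance, hv_fac⟩

theorem stmt13_general {E B : Type*} [Category E] [Category B]
    (π : E ⥤ B) (h₁ : HasCocartLifts π) :
    (∀ {d e e' : E} (f : d ⟶ e) (g : e ⟶ e'),
      IsCocartArrow π g → IsCocartArrow π (f ≫ g) → IsCocartArrow π f) ↔
    (∀ {x y z : E} (k : x ⟶ y) (f : y ⟶ z),
      IsIso (π.map k) → IsCocartArrow π f → IsCocartArrow π (k ≫ f) →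
      IsIso k) := by
  constructor
  · intro cancel x y z k f hk hf hkf
    exact (cancel k f hf hkf).isIso_of_isIso_map hk
  · intro conservative d e e' f g hg hfg
    obtain ⟨m, c, v, hc, hv, rfl⟩ := h₁.exists_cocart_comp_vertical f
    have hvg : IsCocartArrow π (v ≫ g) := hc.of_comp (by simpa using hfg)
    have : IsIso v := conservative v g hv hg hvg
    exact hc.comp (.of_isIso v)

/-- For a bicartesian fibration with stable internal sums, left cancellation of
cocartesian arrows is equivalent to conservativity of cocartesian transport:
whenever `k` is vertical and both `f` and `k ≫ f` are cocartesian, `k` is an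
isomorphism. -/
theorem stmt13 {E B : Type*} [Category E] [Category B] [HasPullbacks B]
    (π : E ⥤ B) (h₁ : HasCocartLifts π) (h₂ : HasCartLifts π)
    (stable : ∀ {d e x : E} (f : d ⟶ e) (h : x ⟶ e), IsCocartArrow π f →
      ∃ (p : E) (fst : p ⟶ d) (snd : p ⟶ x),
        IsPullback fst snd f h ∧ IsCocartArrow π snd) :
    (∀ {d e e' : E} (f : d ⟶ e) (g : e ⟶ e'),
      IsCocartArrow π g → IsCocartArrow π (f ≫ g) → IsCocartArrow π f) ↔
    (∀ {x y z : E} (k : x ⟶ y) (f : y ⟶ z),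
      IsIso (π.map k) → IsCocartArrow π f → IsCocartArrow π (k ≫ f) →
      IsIso k) :=
  stmt13_general π h₁
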